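/- arXiv:1405.0317 — 2 statements merged into one kernel-verified Lean document; each statement's English description precedes it below -/
import Mathlib

section
/- Consider the Cucker–Smale system with random failures: k ≥ 2 agents with positions X_i(t) ∈ ℝ³ and velocities V_i(t) ∈ ℝ³ evolving by X_i(t+h) = X_i(t) + h V_i(t) and V_i(t+h) = V_i(t) + h Σ_{j=1}^k a_{ij}(t)(V_j(t) − V_i(t)), where 0 < h ≤ 1/k and a_{ij}(t) = ζ^{ij}_t (1 + ‖X_i(t) − X_j(t)‖)^{−α} for i ≠ j, with symmetric failure variables ζ^{ij}_t = ζ^{ji}_t that are i.i.d. Bernoulli over pairs {i,j} and time steps t, with P(ζ^{ij}_t = 1) = 1 − λ and P(ζ^{ij}_t = 0) = λ for a fixed failure rate λ ∈ (0,1). If 0 ≤ α < 1, then almost surely: (a) the velocities converge to the common initial mean velocity, i.e. V_i(th) → V̄(0) as t → ∞ for every i, where V̄(0) = (1/k)Σ_{j=1}^k V_j(0); and (b) there exists a limiting configuration (x̂_1,…,x̂_k) ∈ (ℝ³)^k such that X_i(th) − X̄(th) → x̂_i as t → ∞ for every i, where X̄(t) = (1/k)Σ_{j=1}^k X_j(t).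 -/
/-!
Fix a velocity coordinate. One step of the dynamics replaces each agent's coordinate by a convex
combination of all of them, so the spread `max - min` never increases, and it shrinks by the
factor `1 - 2hθ` when all weights between distinct agents are at least `θ`. Hence velocities stay
bounded, mutual distances grow at most linearly, and at a step where every link works all weights
are at least `c (1 + t)^(-α)`. The events "every link works at step `t`" are independent with a
common positive probability, so by the strong law of large numbers almost surely a fraction
`γ > 0` of the first `T` steps are of this kind. The spread at time `T` is then at most
`exp (-β T^(1-α))`, which is summable because `α < 1`. The mean velocity is conserved since the
weights are symmetric, so the velocities converge to it, and the positions relative to the centre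
of mass converge because their increments `h (V_i - V̄)` are summable.
-/

open scoped ENNReal
open MeasureTheory ProbabilityTheory Filter Finset Topology

lemma summable_exp_neg_mul_rpow {β p : ℝ} (hβ : 0 < β) (hp : 0 < p) :
    Summable fun n : ℕ => Real.exp (-β * (n : ℝ) ^ p) := by
  have hlim : Tendsto (fun n : ℕ => (n : ℝ) ^ p) atTop atTop :=
    (tendsto_rpow_atTop hp).comp tendsto_natCast_atTop_atTop
  have hO := ((isLittleO_exp_neg_mul_rpow_atTop hβ (-2 / p)).comp_tendsto hlim).isBigO
  refine summable_of_isBigO_nat (Real.summable_nat_rpow.2 (by norm_num : (-2 : ℝ) < -1))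
    (hO.congr_right fun n => ?_)
  rw [Function.comp_apply, ← Real.rpow_mul n.cast_nonneg, mul_div_cancel₀ _ hp.ne']

lemma mul_rpow_le_sum_ite {α γ : ℝ} (hα : 0 ≤ α) (hγ : 0 ≤ γ) {G : ℕ → Prop}
    [DecidablePred G] {T : ℕ} (hT : 1 ≤ T) (hG : γ * T ≤ #{t ∈ range T | G t}) :
    γ * 2 ^ (-α) * (T : ℝ) ^ (1 - α) ≤
      ∑ t ∈ range T, if G t then (1 + t : ℝ) ^ (-α) else 0 := by
  have hT0 : (0 : ℝ) < T := by exact_mod_cast hT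
  have hT1 : (1 : ℝ) ≤ T := by exact_mod_cast hT
  calc γ * 2 ^ (-α) * (T : ℝ) ^ (1 - α) = (2 * T : ℝ) ^ (-α) * (γ * T) := by
        rw [Real.mul_rpow zero_le_two hT0.le, sub_eq_neg_add, Real.rpow_add hT0, Real.rpow_one]
        ring
    _ ≤ (1 + T : ℝ) ^ (-α) * #{t ∈ range T | G t} :=
        mul_le_mul (Real.rpow_le_rpow_of_nonpos (by positivity) (by linarith) (by linarith))
          hG (by positivity) (by positivity)
    _ = ∑ t ∈ range T, if G t then (1 + T : ℝ) ^ (-α) else 0 := by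
        rw [← sum_filter, sum_const, nsmul_eq_mul, mul_comm]
    _ ≤ ∑ t ∈ range T, if G t then (1 + t : ℝ) ^ (-α) else 0 := by
        gcongr with t ht
        split_ifs
        · exact Real.rpow_le_rpow_of_nonpos (by positivity)
            (by simpa using (mem_range.1 ht).le) (by linarith)
        · rfl

lemma le_mul_exp_neg_sum_of_le_one_sub_mul {δ r : ℕ → ℝ} (hδ : ∀ t, 0 ≤ δ t)
    (hstep : ∀ t, δ (t + 1) ≤ (1 - r t) * δ t) (T : ℕ) :
    δ T ≤ δ 0 * Real.exp (-∑ t ∈ range T, r t) := by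
  induction T with
  | zero => simp
  | succ T ih =>
    calc δ (T + 1) ≤ (1 - r T) * δ T := hstep T
      _ ≤ Real.exp (-r T) * δ T := by
        gcongr
        · exact hδ T
        · linarith [Real.add_one_le_exp (-r T)]
      _ ≤ Real.exp (-r T) * (δ 0 * Real.exp (-∑ t ∈ range T, r t)) := by gcongr
      _ = δ 0 * Real.exp (-∑ t ∈ range (T + 1), r t) := by
        rw [sum_range_succ, neg_add, Real.exp_add]; ring

lemma sum_sum_smul_sub_eq_zero {R ι E : Type*} [CommRing R] [Fintype ι] [AddCommGroup E]
    [Module R E] {a : ι → ι → R} (ha : ∀ i j, a i j = a j i) (v : ι → E) :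
    ∑ i, ∑ j, a i j • (v j - v i) = 0 := by
  simp only [smul_sub, sum_sub_distrib]
  rw [sum_comm, sub_eq_zero]
  simp only [ha]

lemma EuclideanSpace.norm_le_sum_abs {n : Type*} [Fintype n] (x : EuclideanSpace ℝ n) :
    ‖x‖ ≤ ∑ c, |x c| := by
  conv_lhs => rw [← (EuclideanSpace.basisFun n ℝ).sum_repr x]
  refine (norm_sum_le _ _).trans_eq (sum_congr rfl fun c _ => ?_)
  simp [norm_smul]

lemma exists_tendsto_sub_mean {ι E : Type*} [Fintype ι] [NormedAddCommGroup E]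
    [NormedSpace ℝ E] [CompleteSpace E] {x : ℕ → ι → E} {w : E}
    (hx : ∀ i, Summable fun t => ‖x (t + 1) i - x t i - w‖) :
    ∃ xhat : ι → E, ∀ i, Tendsto (fun t => x t i - (Fintype.card ι : ℝ)⁻¹ • ∑ j, x t j)
      atTop (𝓝 (xhat i)) := by
  have hz : ∀ i, ∃ z, Tendsto (fun t : ℕ => x t i - (t : ℝ) • w) atTop (𝓝 z) := fun i =>
    cauchySeq_tendsto_of_complete <| cauchySeq_of_summable_dist <| (hx i).congr fun t => by
      rw [dist_comm, dist_eq_norm]; congr 1; push_cast; module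
  choose z hz using hz
  refine ⟨fun i => z i - (Fintype.card ι : ℝ)⁻¹ • ∑ j, z j, fun i => ?_⟩
  have : Nonempty ι := ⟨i⟩
  have hcard : (Fintype.card ι : ℝ) ≠ 0 := Nat.cast_ne_zero.2 Fintype.card_ne_zero
  refine ((hz i).sub ((tendsto_finsetSum _ fun j _ => hz j).const_smul _)).congr fun t => ?_
  rw [sum_sub_distrib, sum_const, card_univ, ← Nat.cast_smul_eq_nsmul ℝ, smul_sub, smul_smul,
    inv_mul_cancel₀ hcard, one_smul]
  abel

lemma eventually_mul_le_of_tendsto_div {u : ℕ → ℝ} {q γ : ℝ}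
    (hu : Tendsto (fun T : ℕ => u T / T) atTop (𝓝 q)) (hγ : γ < q) :
    ∀ᶠ T : ℕ in atTop, γ * T ≤ u T := by
  filter_upwards [hu.eventually (eventually_gt_nhds hγ), eventually_gt_atTop 0] with T hT hT0
  exact ((lt_div_iff₀ (by exact_mod_cast hT0)).1 hT).le

section Probability

variable {Ω : Type*} [MeasurableSpace Ω] {μ : Measure Ω}

lemma identDistrib_indicator_one {Ω' : Type*} [MeasurableSpace Ω'] {ν : Measure Ω'}
    [IsProbabilityMeasure μ] [IsProbabilityMeasure ν] {A : Set Ω} {B : Set Ω'}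
    (hA : MeasurableSet A) (hB : MeasurableSet B) (hAB : μ A = ν B) :
    IdentDistrib (A.indicator fun _ => (1 : ℝ)) (B.indicator fun _ => 1) μ ν where
  aemeasurable_fst := (measurable_const.indicator hA).aemeasurable
  aemeasurable_snd := (measurable_const.indicator hB).aemeasurable
  map_eq := by
    classical
    ext s hs
    rw [Measure.map_apply (measurable_const.indicator hA) hs,
      Measure.map_apply (measurable_const.indicator hB) hs,
      Set.indicator_const_preimage_eq_union, Set.indicator_const_preimage_eq_union]
    have hAc : μ Aᶜ = ν Bᶜ := by
      rw [prob_compl_eq_one_sub hA, prob_compl_eq_one_sub hB, hAB]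
    split_ifs <;> simp [Set.union_compl_self, hAB, hAc]

open scoped Classical in
lemma ProbabilityTheory.iIndepSet.ae_tendsto_card_filter_div [IsProbabilityMeasure μ]
    {A : ℕ → Set Ω} (hA : ∀ t, MeasurableSet (A t)) (h : iIndepSet A μ)
    (hμ : ∀ t, μ (A t) = μ (A 0)) :
    ∀ᵐ ω ∂μ, Tendsto (fun T : ℕ => (#{t ∈ range T | ω ∈ A t} : ℝ) / T) atTop
      (𝓝 (μ.real (A 0))) := by
  have hslln := strong_law_ae_real (μ := μ) (fun t => (A t).indicator fun _ => 1)
    ((integrable_const 1).indicator (hA 0))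
    (fun s t hst => (h.iIndepFun_indicator (β := ℝ)).indepFun hst)
    (fun t => identDistrib_indicator_one (hA t) (hA 0) (hμ t))
  filter_upwards [hslln] with ω hω
  rw [integral_indicator_const _ (hA 0), smul_eq_mul, mul_one] at hω
  simpa [Set.indicator_apply] using hω

namespace ProbabilityTheory.iIndepFun

variable {ι κ β : Type*} [Fintype κ] [MeasurableSpace β] {f : ι × κ → Ω → β} {B : Set β}

lemma measure_biInter_iInter_preimage (h : iIndepFun f μ) (hB : MeasurableSet B)
    (S : Finset ι) :
    μ (⋂ i ∈ S, ⋂ p, f (i, p) ⁻¹' B) = ∏ i ∈ S, ∏ p, μ (f (i, p) ⁻¹' B) := by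
  classical
  have hS : ⋂ i ∈ S, ⋂ p, f (i, p) ⁻¹' B = ⋂ q ∈ S ×ˢ univ, f q ⁻¹' B := by
    ext ω
    simp only [Set.mem_iInter, Set.mem_preimage, mem_product, mem_univ, and_true, Prod.forall]
    exact forall_congr' fun i => forall_comm
  rw [hS, h.measure_inter_preimage_eq_mul _ (fun _ _ => hB), prod_product]

lemma measure_iInter_preimage (h : iIndepFun f μ) (hB : MeasurableSet B) (i : ι) :
    μ (⋂ p, f (i, p) ⁻¹' B) = ∏ p, μ (f (i, p) ⁻¹' B) := by
  simpa using h.measure_biInter_iInter_preimage hB {i}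

lemma iIndepSet_iInter_preimage (hf : ∀ q, Measurable (f q)) (h : iIndepFun f μ)
    (hB : MeasurableSet B) : iIndepSet (fun i => ⋂ p, f (i, p) ⁻¹' B) μ := by
  rw [iIndepSet_iff_meas_biInter fun i => .iInter fun p => hf _ hB]
  intro S
  simp only [h.measure_biInter_iInter_preimage hB, h.measure_iInter_preimage hB]

end ProbabilityTheory.iIndepFun

open scoped Classical in
lemma ae_exists_pos_eventually_mul_le_card_connected {ι : Type*} [Fintype ι] [LinearOrder ι]
    [IsProbabilityMeasure μ] {ζ : ℕ → ι → ι → Ω → ℝ} {r : ℝ≥0∞}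
    (hmeas : ∀ t i j, Measurable (ζ t i j)) (hsymm : ∀ t i j, ζ t i j = ζ t j i)
    (hform : ∀ t i j, i ≠ j → μ {ω | ζ t i j ω = 1} = r) (hr : r ≠ 0)
    (hindep : iIndepFun (fun q : ℕ × {p : ι × ι // p.1 < p.2} => ζ q.1 q.2.1.1 q.2.1.2) μ) :
    ∀ᵐ ω ∂μ, ∃ γ : ℝ, 0 < γ ∧ ∀ᶠ T : ℕ in atTop,
      γ * T ≤ #{t ∈ range T | ∀ i j, i ≠ j → ζ t i j ω = 1} := by
  set A : ℕ → Set Ω := fun t => ⋂ p : {p : ι × ι // p.1 < p.2},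
    (fun q : ℕ × {p : ι × ι // p.1 < p.2} => ζ q.1 q.2.1.1 q.2.1.2) (t, p) ⁻¹' {1}
  have hA : ∀ t ω, ω ∈ A t ↔ ∀ i j, i ≠ j → ζ t i j ω = 1 := fun t ω => by
    simp only [A, Set.mem_iInter, Set.mem_preimage, Set.mem_singleton_iff, Subtype.forall,
      Prod.forall]
    refine ⟨fun hA i j hij => ?_, fun hA i j hij => hA i j hij.ne⟩
    rcases hij.lt_or_gt with hij | hij
    · exact hA i j hij
    · rw [hsymm]; exact hA j i hij
  have hAmeas : ∀ t, MeasurableSet (A t) := fun t =>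
    .iInter fun p => hmeas _ _ _ (measurableSet_singleton 1)
  have hμA : ∀ t, μ (A t) = r ^ Fintype.card {p : ι × ι // p.1 < p.2} := fun t => by
    rw [hindep.measure_iInter_preimage (measurableSet_singleton 1)]
    exact (prod_congr rfl fun p _ => hform _ _ _ p.2.ne).trans (prod_const _)
  have hq : 0 < μ.real (A 0) :=
    ENNReal.toReal_pos (by rw [hμA]; exact pow_ne_zero _ hr) (measure_ne_top μ _)
  filter_upwards [(hindep.iIndepSet_iInter_preimage (fun q => hmeas _ _ _)
    (measurableSet_singleton 1)).ae_tendsto_card_filter_div hAmeas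
    (fun t => by rw [hμA, hμA])] with ω hω
  refine ⟨_, half_pos hq, (eventually_mul_le_of_tendsto_div hω (half_lt_self hq)).mono
    fun T hT => ?_⟩
  rwa [filter_congr fun t _ => hA t ω] at hT

end Probability

section Consensus

variable {ι : Type*} [Fintype ι] {h θ : ℝ} {a : ι → ι → ℝ} {v : ι → ℝ}

lemma consensus_step_le (hh : 0 ≤ h) (hhk : h * Fintype.card ι ≤ 1) (hθ : θ ≤ 1)
    (ha0 : ∀ i j, 0 ≤ a i j) (ha1 : ∀ i j, a i j ≤ 1) (haθ : ∀ i j, i ≠ j → θ ≤ a i j)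
    {M : ℝ} (hM : ∀ j, v j ≤ M) (j₀ i : ι) :
    v i + h * ∑ j, a i j * (v j - v i) ≤ M - h * θ * (M - v j₀) := by
  classical
  set A := ∑ j ∈ univ.erase i, a i j
  have hA : A + 1 ≤ Fintype.card ι := by
    have := sum_le_card_nsmul (univ.erase i) (a i) 1 fun j _ => ha1 i j
    rw [card_erase_of_mem (mem_univ i), card_univ, nsmul_one,
      Nat.cast_pred (Fintype.card_pos_iff.2 ⟨i⟩)] at this
    linarith
  have hhA : h * θ ≤ 1 - h * A := by nlinarith
  have hsplit : v i + h * ∑ j, a i j * (v j - v i) - M =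
      (1 - h * A) * (v i - M) + h * ∑ j ∈ univ.erase i, a i j * (v j - M) := by
    have hsum : ∑ j ∈ univ.erase i, a i j * (v j - v i) =
        ∑ j ∈ univ.erase i, a i j * (v j - M) - A * (v i - M) := by
      rw [sum_mul, ← sum_sub_distrib]
      exact sum_congr rfl fun j _ => by ring
    rw [← add_sum_erase _ _ (mem_univ i), sub_self, mul_zero, zero_add, hsum]
    ring
  have hrest : ∀ s ⊆ univ.erase i, ∑ j ∈ s, a i j * (v j - M) ≤ 0 := fun s _ =>
    sum_nonpos fun j _ => mul_nonpos_of_nonneg_of_nonpos (ha0 i j) (by linarith [hM j])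
  rcases eq_or_ne j₀ i with rfl | hne
  · nlinarith [hrest _ subset_rfl, hM j₀]
  · have hj₀ : j₀ ∈ univ.erase i := mem_erase.2 ⟨hne, mem_univ _⟩
    have h1 : ∑ j ∈ univ.erase i, a i j * (v j - M) ≤ θ * (v j₀ - M) := by
      rw [← add_sum_erase _ _ hj₀]
      nlinarith [hrest _ (erase_subset j₀ _), haθ i j₀ hne.symm, hM j₀]
    have h2 : (1 - h * A) * (v i - M) ≤ 0 :=
      mul_nonpos_of_nonneg_of_nonpos (by nlinarith) (by linarith [hM i])
    nlinarith [mul_le_mul_of_nonneg_left h1 hh]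

lemma le_consensus_step (hh : 0 ≤ h) (hhk : h * Fintype.card ι ≤ 1) (hθ : θ ≤ 1)
    (ha0 : ∀ i j, 0 ≤ a i j) (ha1 : ∀ i j, a i j ≤ 1) (haθ : ∀ i j, i ≠ j → θ ≤ a i j)
    {m : ℝ} (hm : ∀ j, m ≤ v j) (j₁ i : ι) :
    m + h * θ * (v j₁ - m) ≤ v i + h * ∑ j, a i j * (v j - v i) := by
  have := consensus_step_le (v := -v) (M := -m) hh hhk hθ ha0 ha1 haθ
    (fun j => neg_le_neg (hm j)) j₁ i
  have hneg : ∑ j, a i j * (-v j - -v i) = -∑ j, a i j * (v j - v i) := by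
    rw [← sum_neg_distrib]
    exact sum_congr rfl fun j _ => by ring
  simp only [Pi.neg_apply, hneg] at this
  linarith

variable [Nonempty ι]

noncomputable def spread (u : ι → ℝ) : ℝ :=
  univ.sup' univ_nonempty u - univ.inf' univ_nonempty u

lemma abs_sub_le_spread (u : ι → ℝ) (i j : ι) : |u i - u j| ≤ spread u := by
  have := le_sup' u (mem_univ i); have := le_sup' u (mem_univ j)
  have := inf'_le u (mem_univ i); have := inf'_le u (mem_univ j)
  rw [abs_sub_le_iff, spread]; constructor <;> linarith

lemma spread_nonneg (u : ι → ℝ) : 0 ≤ spread u :=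
  (abs_nonneg _).trans (abs_sub_le_spread u (Classical.arbitrary ι) (Classical.arbitrary ι))

lemma abs_sub_mean_le_spread (u : ι → ℝ) (i : ι) :
    |u i - (Fintype.card ι : ℝ)⁻¹ * ∑ j, u j| ≤ spread u := by
  have hk : (0 : ℝ) < Fintype.card ι := Nat.cast_pos.2 Fintype.card_pos
  have hlo := card_nsmul_le_sum univ u (univ.inf' univ_nonempty u) fun j _ =>
    inf'_le u (mem_univ j)
  have hhi := sum_le_card_nsmul univ u (univ.sup' univ_nonempty u) fun j _ =>
    le_sup' u (mem_univ j)
  rw [card_univ, nsmul_eq_mul] at hlo hhi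
  have hmean_lo : univ.inf' univ_nonempty u ≤ (Fintype.card ι : ℝ)⁻¹ * ∑ j, u j := by
    rw [inv_mul_eq_div, le_div_iff₀ hk]; linarith
  have hmean_hi : (Fintype.card ι : ℝ)⁻¹ * ∑ j, u j ≤ univ.sup' univ_nonempty u := by
    rw [inv_mul_eq_div, div_le_iff₀ hk]; linarith
  have := le_sup' u (mem_univ i); have := inf'_le u (mem_univ i)
  rw [abs_sub_le_iff, spread]; constructor <;> linarith

lemma spread_consensus_step_le (hh : 0 ≤ h) (hhk : h * Fintype.card ι ≤ 1) (hθ : θ ≤ 1)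
    (ha0 : ∀ i j, 0 ≤ a i j) (ha1 : ∀ i j, a i j ≤ 1) (haθ : ∀ i j, i ≠ j → θ ≤ a i j)
    (v : ι → ℝ) :
    spread (fun i => v i + h * ∑ j, a i j * (v j - v i)) ≤ (1 - 2 * h * θ) * spread v := by
  obtain ⟨j₀, -, hj₀⟩ := exists_mem_eq_inf' univ_nonempty v
  obtain ⟨j₁, -, hj₁⟩ := exists_mem_eq_sup' univ_nonempty v
  have hsup := sup'_le univ_nonempty _ fun i _ =>
    consensus_step_le (v := v) (M := univ.sup' univ_nonempty v) hh hhk hθ ha0 ha1 haθ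
      (fun j => le_sup' v (mem_univ j)) j₀ i
  have hinf := le_inf' univ_nonempty _ fun i _ =>
    le_consensus_step (v := v) (m := univ.inf' univ_nonempty v) hh hhk hθ ha0 ha1 haθ
      (fun j => inf'_le v (mem_univ j)) j₁ i
  rw [← hj₀] at hsup
  rw [← hj₁] at hinf
  rw [spread, spread]
  linarith

end Consensus

namespace CuckerSmale

variable {ι n : Type*} [Fintype n] {h α : ℝ} {ζ : ℕ → ι → ι → ℝ}
  {X V : ℕ → ι → EuclideanSpace ℝ n}

noncomputable def weight (α : ℝ) (ζ : ℕ → ι → ι → ℝ) (X : ℕ → ι → EuclideanSpace ℝ n)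
    (t : ℕ) (i j : ι) : ℝ :=
  ζ t i j * (1 + ‖X t i - X t j‖) ^ (-α)

lemma weight_nonneg (hζ : ∀ t i j, ζ t i j = 0 ∨ ζ t i j = 1) (t : ℕ) (i j : ι) :
    0 ≤ weight α ζ X t i j := by
  rcases hζ t i j with h0 | h1 <;> simp only [weight, *] <;> positivity

lemma weight_le_one (hα : 0 ≤ α) (hζ : ∀ t i j, ζ t i j = 0 ∨ ζ t i j = 1) (t : ℕ)
    (i j : ι) : weight α ζ X t i j ≤ 1 := by
  rcases hζ t i j with h0 | h1 <;> simp only [weight, *, zero_mul, zero_le_one, one_mul]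
  exact Real.rpow_le_one_of_one_le_of_nonpos (by simp) (by linarith)

lemma weight_symm (hsymm : ∀ t i j, ζ t i j = ζ t j i) (t : ℕ) (i j : ι) :
    weight α ζ X t i j = weight α ζ X t j i := by
  rw [weight, weight, hsymm, norm_sub_rev]

variable [Fintype ι]

structure IsTrajectory (h α : ℝ) (ζ : ℕ → ι → ι → ℝ) (X V : ℕ → ι → EuclideanSpace ℝ n) :
    Prop where
  position_succ : ∀ t i, X (t + 1) i = X t i + h • V t i
  velocity_succ : ∀ t i, V (t + 1) i = V t i + h • ∑ j, weight α ζ X t i j • (V t j - V t i)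

namespace IsTrajectory

lemma sum_velocity_eq (hX : IsTrajectory h α ζ X V) (hsymm : ∀ t i j, ζ t i j = ζ t j i)
    (t : ℕ) : ∑ i, V t i = ∑ i, V 0 i := by
  induction t with
  | zero => rfl
  | succ t ih =>
    simp only [hX.velocity_succ, sum_add_distrib, ← smul_sum,
      sum_sum_smul_sub_eq_zero (weight_symm hsymm t), smul_zero, add_zero, ih]

lemma velocity_apply_succ (hX : IsTrajectory h α ζ X V) (t : ℕ) (i : ι) (c : n) :
    V (t + 1) i c = V t i c + h * ∑ j, weight α ζ X t i j * (V t j c - V t i c) := by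
  simp [hX.velocity_succ, WithLp.ofLp_sum]

variable [Nonempty ι]

lemma spread_velocity_succ_le (hX : IsTrajectory h α ζ X V) (hh : 0 ≤ h)
    (hhk : h * Fintype.card ι ≤ 1) (hα : 0 ≤ α) (hζ : ∀ t i j, ζ t i j = 0 ∨ ζ t i j = 1)
    {θ : ℝ} (hθ : θ ≤ 1) {t : ℕ} (haθ : ∀ i j, i ≠ j → θ ≤ weight α ζ X t i j) (c : n) :
    spread (fun i => V (t + 1) i c) ≤ (1 - 2 * h * θ) * spread (fun i => V t i c) := by
  simpa only [hX.velocity_apply_succ] using spread_consensus_step_le hh hhk hθ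
    (weight_nonneg hζ t) (weight_le_one hα hζ t) haθ (fun i => V t i c)

lemma spread_velocity_antitone (hX : IsTrajectory h α ζ X V) (hh : 0 ≤ h)
    (hhk : h * Fintype.card ι ≤ 1) (hα : 0 ≤ α) (hζ : ∀ t i j, ζ t i j = 0 ∨ ζ t i j = 1)
    (c : n) : Antitone fun t => spread (fun i => V t i c) :=
  antitone_nat_of_succ_le fun t => by
    simpa using hX.spread_velocity_succ_le hh hhk hα hζ zero_le_one
      (fun i j _ => weight_nonneg hζ t i j) c

lemma norm_velocity_sub_le (hX : IsTrajectory h α ζ X V) (hh : 0 ≤ h)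
    (hhk : h * Fintype.card ι ≤ 1) (hα : 0 ≤ α) (hζ : ∀ t i j, ζ t i j = 0 ∨ ζ t i j = 1)
    (t : ℕ) (i j : ι) : ‖V t i - V t j‖ ≤ ∑ c, spread (fun i => V 0 i c) :=
  (EuclideanSpace.norm_le_sum_abs _).trans <| sum_le_sum fun c _ => by
    simpa using (abs_sub_le_spread (fun i => V t i c) i j).trans
      (hX.spread_velocity_antitone hh hhk hα hζ c (Nat.zero_le t))

lemma norm_position_sub_le (hX : IsTrajectory h α ζ X V) (hh : 0 ≤ h)
    (hhk : h * Fintype.card ι ≤ 1) (hα : 0 ≤ α) (hζ : ∀ t i j, ζ t i j = 0 ∨ ζ t i j = 1)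
    (t : ℕ) (i j : ι) :
    ‖X t i - X t j‖ ≤ ‖X 0 i - X 0 j‖ + h * (∑ c, spread (fun i => V 0 i c)) * t := by
  induction t with
  | zero => simp
  | succ t ih =>
    have hstep : X (t + 1) i - X (t + 1) j = (X t i - X t j) + h • (V t i - V t j) := by
      rw [hX.position_succ, hX.position_succ, smul_sub]; abel
    rw [hstep, Nat.cast_succ]
    refine (norm_add_le _ _).trans ?_
    rw [norm_smul, Real.norm_of_nonneg hh]
    nlinarith [hX.norm_velocity_sub_le hh hhk hα hζ t i j]

lemma exists_mul_rpow_le_weight (hX : IsTrajectory h α ζ X V) (hh : 0 ≤ h)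
    (hhk : h * Fintype.card ι ≤ 1) (hα : 0 ≤ α) (hζ : ∀ t i j, ζ t i j = 0 ∨ ζ t i j = 1) :
    ∃ κ ∈ Set.Ioc (0 : ℝ) 1, ∀ t i j, ζ t i j = 1 →
      κ * (1 + t : ℝ) ^ (-α) ≤ weight α ζ X t i j := by
  obtain ⟨R₀, hR₀⟩ := Finite.exists_le fun p : ι × ι => ‖X 0 p.1 - X 0 p.2‖
  set R := max R₀ 0 + h * ∑ c, spread (fun i => V 0 i c)
  have hD : 0 ≤ ∑ c, spread (fun i => V 0 i c) := sum_nonneg fun c _ => spread_nonneg _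
  have hR : 0 ≤ R := by positivity
  refine ⟨(1 + R) ^ (-α), ⟨by positivity, Real.rpow_le_one_of_one_le_of_nonpos (by linarith)
    (by linarith)⟩, fun t i j hij => ?_⟩
  have hdist : 1 + ‖X t i - X t j‖ ≤ (1 + R) * (1 + t) := by
    have hXt := hX.norm_position_sub_le hh hhk hα hζ t i j
    have hX0 := hR₀ (i, j)
    have ht : (0 : ℝ) ≤ t := t.cast_nonneg
    have hmax : R₀ ≤ max R₀ 0 := le_max_left _ _
    have hRt : h * (∑ c, spread (fun i => V 0 i c)) * t ≤ R * t :=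
      mul_le_mul_of_nonneg_right (by simp only [R]; linarith [le_max_right R₀ 0]) ht
    nlinarith
  rw [weight, hij, one_mul, ← Real.mul_rpow (by linarith) (by positivity)]
  exact Real.rpow_le_rpow_of_nonpos (by positivity) hdist (by linarith)

lemma spread_velocity_le_exp (hX : IsTrajectory h α ζ X V) (hh : 0 ≤ h)
    (hhk : h * Fintype.card ι ≤ 1) (hα : 0 ≤ α) (hζ : ∀ t i j, ζ t i j = 0 ∨ ζ t i j = 1)
    {θ : ℕ → ℝ} (hθ1 : ∀ t, θ t ≤ 1) (hθ : ∀ t i j, i ≠ j → θ t ≤ weight α ζ X t i j)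
    (c : n) (T : ℕ) :
    spread (fun i => V T i c) ≤
      spread (fun i => V 0 i c) * Real.exp (-∑ t ∈ range T, 2 * h * θ t) :=
  le_mul_exp_neg_sum_of_le_one_sub_mul (δ := fun t => spread (fun i => V t i c))
    (r := fun t => 2 * h * θ t) (fun _ => spread_nonneg _)
    (fun t => by simpa only [mul_assoc] using
      hX.spread_velocity_succ_le hh hhk hα hζ (hθ1 t) (hθ t) c) T

open scoped Classical in
lemma summable_spread_velocity (hX : IsTrajectory h α ζ X V) (hh : 0 < h)
    (hhk : h * Fintype.card ι ≤ 1) (hα0 : 0 ≤ α) (hα1 : α < 1)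
    (hζ : ∀ t i j, ζ t i j = 0 ∨ ζ t i j = 1) {γ : ℝ} (hγ : 0 < γ)
    (hfreq : ∀ᶠ T : ℕ in atTop, γ * T ≤ #{t ∈ range T | ∀ i j, i ≠ j → ζ t i j = 1})
    (c : n) : Summable fun t => spread (fun i => V t i c) := by
  obtain ⟨κ, ⟨hκ0, hκ1⟩, hκ⟩ := hX.exists_mul_rpow_le_weight hh.le hhk hα0 hζ
  set θ : ℕ → ℝ := fun t =>
    κ * if ∀ i j, i ≠ j → ζ t i j = 1 then (1 + t : ℝ) ^ (-α) else 0
  have hθ1 : ∀ t, θ t ≤ 1 := fun t => by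
    have : (1 + t : ℝ) ^ (-α) ≤ 1 :=
      Real.rpow_le_one_of_one_le_of_nonpos (by simp) (by linarith)
    simp only [θ]; split_ifs <;> nlinarith
  have hθ : ∀ t i j, i ≠ j → θ t ≤ weight α ζ X t i j := fun t i j hij => by
    simp only [θ]; split_ifs with hG
    · exact hκ t i j (hG i j hij)
    · simpa using weight_nonneg hζ t i j
  have hβ : 0 < 2 * h * κ * (γ * 2 ^ (-α)) := by positivity
  refine .of_norm_bounded_eventually_nat
    ((summable_exp_neg_mul_rpow hβ (sub_pos.2 hα1)).mul_left (spread fun i => V 0 i c)) ?_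
  filter_upwards [hfreq, eventually_ge_atTop 1] with T hT hT1
  rw [Real.norm_of_nonneg (spread_nonneg _)]
  refine (hX.spread_velocity_le_exp hh.le hhk hα0 hζ hθ1 hθ c T).trans ?_
  refine mul_le_mul_of_nonneg_left (Real.exp_le_exp.2 ?_) (spread_nonneg _)
  rw [neg_mul, neg_le_neg_iff]
  calc 2 * h * κ * (γ * 2 ^ (-α)) * (T : ℝ) ^ (1 - α)
      = 2 * h * κ * (γ * 2 ^ (-α) * (T : ℝ) ^ (1 - α)) := by ring
    _ ≤ 2 * h * κ * ∑ t ∈ range T,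
          if ∀ i j, i ≠ j → ζ t i j = 1 then (1 + t : ℝ) ^ (-α) else 0 :=
        mul_le_mul_of_nonneg_left (mul_rpow_le_sum_ite hα0 hγ.le hT1 hT) (by positivity)
    _ = ∑ t ∈ range T, 2 * h * θ t := by
        rw [mul_sum]; exact sum_congr rfl fun t _ => by simp only [θ]; ring

lemma norm_velocity_sub_mean_le (hX : IsTrajectory h α ζ X V)
    (hsymm : ∀ t i j, ζ t i j = ζ t j i) (t : ℕ) (i : ι) :
    ‖V t i - (Fintype.card ι : ℝ)⁻¹ • ∑ j, V 0 j‖ ≤ ∑ c, spread (fun i => V t i c) := by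
  rw [← hX.sum_velocity_eq hsymm t]
  refine (EuclideanSpace.norm_le_sum_abs _).trans (sum_le_sum fun c _ => ?_)
  simpa [WithLp.ofLp_sum] using abs_sub_mean_le_spread (fun i => V t i c) i

open scoped Classical in
theorem flocking (hX : IsTrajectory h α ζ X V) (hh : 0 < h)
    (hhk : h * Fintype.card ι ≤ 1) (hα0 : 0 ≤ α) (hα1 : α < 1)
    (hsymm : ∀ t i j, ζ t i j = ζ t j i) (hζ : ∀ t i j, ζ t i j = 0 ∨ ζ t i j = 1)
    {γ : ℝ} (hγ : 0 < γ)
    (hfreq : ∀ᶠ T : ℕ in atTop, γ * T ≤ #{t ∈ range T | ∀ i j, i ≠ j → ζ t i j = 1}) :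
    (∀ i, Tendsto (fun t => V t i) atTop (𝓝 ((Fintype.card ι : ℝ)⁻¹ • ∑ j, V 0 j))) ∧
      ∃ xhat : ι → EuclideanSpace ℝ n, ∀ i,
        Tendsto (fun t => X t i - (Fintype.card ι : ℝ)⁻¹ • ∑ j, X t j) atTop (𝓝 (xhat i)) := by
  have hs : Summable fun t => ∑ c, spread (fun i => V t i c) :=
    summable_sum fun c _ => hX.summable_spread_velocity hh hhk hα0 hα1 hζ hγ hfreq c
  have hdev := hX.norm_velocity_sub_mean_le hsymm
  refine ⟨fun i => tendsto_iff_norm_sub_tendsto_zero.2 <| squeeze_zero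
    (fun _ => norm_nonneg _) (fun t => hdev t i) hs.tendsto_atTop_zero,
    exists_tendsto_sub_mean (w := h • (Fintype.card ι : ℝ)⁻¹ • ∑ j, V 0 j) fun i =>
      (hs.mul_left h).of_nonneg_of_le (fun _ => norm_nonneg _) fun t => ?_⟩
  rw [hX.position_succ, add_sub_cancel_left, ← smul_sub, norm_smul, Real.norm_of_nonneg hh.le]
  exact mul_le_mul_of_nonneg_left (hdev t i) hh.le

end IsTrajectory

end CuckerSmale

theorem stmt0_general (k : ℕ) (h : ℝ) (hh0 : 0 < h) (hhk : h ≤ 1 / k)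
    (α : ℝ) (hα0 : 0 ≤ α) (hα1 : α < 1) (lam : ℝ) (hlam1 : lam < 1)
    (Ω : Type*) [MeasurableSpace Ω] (P : Measure Ω) [IsProbabilityMeasure P]
    (ζ : ℕ → Fin k → Fin k → Ω → ℝ)
    (hζmeas : ∀ t i j, Measurable (ζ t i j))
    (hζsymm : ∀ t i j, ζ t i j = ζ t j i)
    (hζval : ∀ t i j ω, ζ t i j ω = 0 ∨ ζ t i j ω = 1)
    (hζform : ∀ t i j, i ≠ j → P {ω | ζ t i j ω = 1} = ENNReal.ofReal (1 - lam))
    (hζindep : iIndepFun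
      (fun q : ℕ × {p : Fin k × Fin k // p.1 < p.2} => ζ q.1 q.2.1.1 q.2.1.2) P)
    (X V : ℕ → Ω → Fin k → EuclideanSpace ℝ (Fin 3))
    (V0 : Fin k → EuclideanSpace ℝ (Fin 3))
    (hV0 : ∀ ω, V 0 ω = V0)
    (hdynX : ∀ t ω i, X (t + 1) ω i = X t ω i + h • V t ω i)
    (hdynV : ∀ t ω i, V (t + 1) ω i = V t ω i +
      h • ∑ j, (ζ t i j ω * (1 + ‖X t ω i - X t ω j‖) ^ (-α)) •
        (V t ω j - V t ω i)) :
    ∀ᵐ ω ∂P,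
      (∀ i, Tendsto (fun t => V t ω i) atTop (nhds ((k : ℝ)⁻¹ • ∑ j, V0 j))) ∧
      ∃ xhat : Fin k → EuclideanSpace ℝ (Fin 3),
        ∀ i, Tendsto (fun t => X t ω i - (k : ℝ)⁻¹ • ∑ j, X t ω j)
          atTop (nhds (xhat i)) := by
  have hk : 0 < k := Nat.pos_of_ne_zero fun hk => by simp [hk] at hhk; linarith
  have : Nonempty (Fin k) := ⟨⟨0, hk⟩⟩
  have hhk' : h * Fintype.card (Fin k) ≤ 1 := by
    rwa [Fintype.card_fin, ← le_div_iff₀ (by positivity)]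
  filter_upwards [ae_exists_pos_eventually_mul_le_card_connected hζmeas hζsymm hζform
    (ENNReal.ofReal_pos.2 (by linarith)).ne' hζindep] with ω ⟨γ, hγ, hfreq⟩
  have hX : CuckerSmale.IsTrajectory h α (fun t i j => ζ t i j ω) (X · ω) (V · ω) :=
    ⟨fun t i => hdynX t ω i, fun t i => hdynV t ω i⟩
  -- `convert` only reconciles the `Decidable` instances of the two filters
  have := hX.flocking hh0 hhk' hα0 hα1 (fun t i j => congrFun (hζsymm t i j) ω)
    (fun t i j => hζval t i j ω) hγ (by convert hfreq)
  simpa only [hV0 ω, Fintype.card_fin] using this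

/-- **Flocking for the Cucker–Smale model with random failures, sub-linear case.**
`k ≥ 2` agents with positions `X t ω i` and velocities `V t ω i` in `ℝ³` (at time
`t*h`) evolve by the Cucker–Smale dynamics with time step `0 < h ≤ 1/k` and weights
`a_{ij}(t) = ζ^{ij}_t (1 + ‖X_i − X_j‖)^(−α)`, where the failure variables
`ζ^{ij}_t ∈ {0,1}` are symmetric in `(i,j)`, independent over unordered pairs of
distinct agents and time steps, and Bernoulli with `P(ζ = 1) = 1 − λ`,
`P(ζ = 0) = λ`, `λ ∈ (0,1)`. If `0 ≤ α < 1`, then almost surely all velocities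
converge to the initial mean velocity and the positions relative to the center of
mass converge to a limiting configuration. -/
theorem stmt0 (k : ℕ) (hk : 2 ≤ k) (h : ℝ) (hh0 : 0 < h) (hhk : h ≤ 1 / k)
    (α : ℝ) (hα0 : 0 ≤ α) (hα1 : α < 1) (lam : ℝ) (hlam0 : 0 < lam) (hlam1 : lam < 1)
    (Ω : Type*) [MeasurableSpace Ω] (P : Measure Ω) [IsProbabilityMeasure P]
    (ζ : ℕ → Fin k → Fin k → Ω → ℝ)
    (hζmeas : ∀ t i j, Measurable (ζ t i j))
    (hζsymm : ∀ t i j, ζ t i j = ζ t j i)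
    (hζval : ∀ t i j ω, ζ t i j ω = 0 ∨ ζ t i j ω = 1)
    (hζform : ∀ t i j, i ≠ j → P {ω | ζ t i j ω = 1} = ENNReal.ofReal (1 - lam))
    (hζfail : ∀ t i j, i ≠ j → P {ω | ζ t i j ω = 0} = ENNReal.ofReal lam)
    (hζindep : iIndepFun
      (fun q : ℕ × {p : Fin k × Fin k // p.1 < p.2} => ζ q.1 q.2.1.1 q.2.1.2) P)
    (X V : ℕ → Ω → Fin k → EuclideanSpace ℝ (Fin 3))
    (X0 V0 : Fin k → EuclideanSpace ℝ (Fin 3))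
    (hX0 : ∀ ω, X 0 ω = X0) (hV0 : ∀ ω, V 0 ω = V0)
    (hdynX : ∀ t ω i, X (t + 1) ω i = X t ω i + h • V t ω i)
    (hdynV : ∀ t ω i, V (t + 1) ω i = V t ω i +
      h • ∑ j, (ζ t i j ω * (1 + ‖X t ω i - X t ω j‖) ^ (-α)) •
        (V t ω j - V t ω i)) :
    ∀ᵐ ω ∂P,
      (∀ i, Tendsto (fun t => V t ω i) atTop (nhds ((k : ℝ)⁻¹ • ∑ j, V0 j))) ∧
      ∃ xhat : Fin k → EuclideanSpace ℝ (Fin 3),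
        ∀ i, Tendsto (fun t => X t ω i - (k : ℝ)⁻¹ • ∑ j, X t ω j)
          atTop (nhds (xhat i)) :=
  stmt0_general k h hh0 hhk α hα0 hα1 lam hlam1 Ω P ζ hζmeas hζsymm hζval hζform hζindep X V V0 hV0
    hdynX hdynV
end

section
/- Let 0 ≤ α < 1, h > 0, A > 0, B > 0, and let (ζ_i)_{i ≥ 0} be independent random variables taking values in [0, M] with common mean E[ζ_i] = m > 0, where hMA/(B+1) ≤ 1. Define the random partial sums S[τ] = Σ_{j=1}^{τ−1} ∏_{i=0}^{j−1} (1 − h ζ_i A/(B + i^α)). Then sup_τ E[S[τ]] < ∞, and the increasing sequence S[τ] converges almost surely to a finite limit S = Σ_{j=1}^∞ ∏_{i=0}^{j−1} (1 − h ζ_i A/(B + i^α)) < ∞. -/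
/-! Write `F i = 1 - h ζ_i A / (B + i^α)`. By independence,
`E ∏_{i<j} F i = ∏_{i<j} (1 - h m A / (B + i^α))`. Since `B + i^α ≤ (B + 1) j^α` for
`1 ≤ i ≤ j`, the deterministic product over `1 ≤ i ≤ j` is at most `exp (-c j^(1-α))`, which is
summable because `α < 1`. For `i ≥ 1` the factors `F i` lie in `[0, 1]`, so the random products
over `1 ≤ i ≤ j` have summable expectations and are therefore almost surely summable. The factor
`F 0`, equal to `1 - h ζ_0 A / B` when `α > 0` (as `0 ^ α = 0`), may be negative; it only
multiplies the whole series. -/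

open MeasureTheory ProbabilityTheory Filter
open Real Finset Topology

lemma summable_exp_neg_mul_rpow_s10 {c δ : ℝ} (hc : 0 < c) (hδ : 0 < δ) :
    Summable fun n : ℕ => exp (-c * (n : ℝ) ^ δ) := by
  have hlim :
      Tendsto (fun n : ℕ => (n : ℝ) ^ (2 : ℝ) * exp (-c * (n : ℝ) ^ δ)) atTop (𝓝 0) := by
    refine ((tendsto_rpow_mul_exp_neg_mul_atTop_nhds_zero (2 / δ) c hc).comp
      ((tendsto_rpow_atTop hδ).comp tendsto_natCast_atTop_atTop)).congr fun n => ?_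
    simp only [Function.comp_apply, ← rpow_mul (Nat.cast_nonneg n), mul_div_cancel₀ _ hδ.ne']
  refine (summable_nat_rpow_inv.mpr one_lt_two).of_norm_bounded_eventually_nat ?_
  filter_upwards [hlim.eventually (gt_mem_nhds one_pos), eventually_gt_atTop 0] with n hn hn0
  have hpos : (0 : ℝ) < (n : ℝ) ^ (2 : ℝ) := by positivity
  rw [norm_of_nonneg (exp_pos _).le, le_inv_comm₀ (exp_pos _) hpos, inv_eq_one_div,
    le_div_iff₀ (exp_pos _)]
  exact hn.le

lemma prod_one_sub_le_exp_neg_sum {ι : Type*} {s : Finset ι} {x : ι → ℝ}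
    (hx : ∀ i ∈ s, x i ≤ 1) :
    ∏ i ∈ s, (1 - x i) ≤ exp (-∑ i ∈ s, x i) := by
  calc ∏ i ∈ s, (1 - x i) ≤ ∏ i ∈ s, exp (-x i) :=
        prod_le_prod (fun i hi => sub_nonneg.mpr (hx i hi)) fun i _ => one_sub_le_exp_neg _
    _ = exp (-∑ i ∈ s, x i) := by rw [← sum_neg_distrib, exp_sum]

lemma ae_summable_of_summable_integral_norm {Ω E ι : Type*} [MeasurableSpace Ω]
    {μ : Measure Ω} [NormedAddCommGroup E] [CompleteSpace E] [Countable ι] {f : ι → Ω → E}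
    (hf : ∀ n, Integrable (f n) μ) (hs : Summable fun n => ∫ ω, ‖f n ω‖ ∂μ) :
    ∀ᵐ ω ∂μ, Summable fun n => f n ω := by
  have hmeas n : AEMeasurable (fun ω => ‖f n ω‖ₑ) μ := (hf n).1.enorm
  have hfin : ∫⁻ ω, ∑' n, ‖f n ω‖ₑ ∂μ ≠ ⊤ := by
    rw [lintegral_tsum hmeas,
      ← tsum_congr fun n => ofReal_integral_norm_eq_lintegral_enorm (hf n),
      ← ENNReal.ofReal_tsum_of_nonneg (fun n => integral_nonneg fun _ => norm_nonneg _) hs]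
    exact ENNReal.ofReal_ne_top
  filter_upwards [ae_lt_top' (AEMeasurable.tsum hmeas) hfin] with ω hω
  exact Summable.of_enorm hω.ne

lemma ProbabilityTheory.iIndepFun.integral_finset_prod_eq_prod_integral {Ω ι : Type*}
    [MeasurableSpace Ω] {μ : Measure Ω} {X : ι → Ω → ℝ} (hX : iIndepFun X μ)
    (mX : ∀ i, AEStronglyMeasurable (X i) μ) (s : Finset ι) :
    ∫ ω, ∏ i ∈ s, X i ω ∂μ = ∏ i ∈ s, ∫ ω, X i ω ∂μ := by
  have hprod := (hX.precomp Subtype.val_injective (g := ((↑) : s → ι))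
    ).integral_fun_prod_eq_prod_integral fun i => mX i
  calc ∫ ω, ∏ i ∈ s, X i ω ∂μ = ∫ ω, ∏ i : s, X i ω ∂μ := by
        congr 1 with ω; exact (prod_coe_sort s fun i => X i ω).symm
    _ = ∏ i ∈ s, ∫ ω, X i ω ∂μ := hprod.trans (prod_coe_sort s fun i => ∫ ω, X i ω ∂μ)

lemma Summable.prod_range_succ {R : Type*} [CommSemiring R] [TopologicalSpace R]
    [IsTopologicalSemiring R] {a : ℕ → R} (h : Summable fun j => ∏ i ∈ range j, a (i + 1)) :
    Summable fun j => ∏ i ∈ range (j + 1), a i :=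
  (h.mul_right (a 0)).congr fun j => (prod_range_succ' a j).symm

lemma tendsto_sum_Ico_one_of_hasSum {M : Type*} [AddCommMonoid M] [TopologicalSpace M]
    {f : ℕ → M} {s : M} (h : HasSum (fun j => f (j + 1)) s) :
    Tendsto (fun τ => ∑ j ∈ Ico 1 τ, f j) atTop (𝓝 s) := by
  refine (h.tendsto_sum_nat.comp (tendsto_sub_atTop_nat 1)).congr fun τ => ?_
  simp only [Function.comp_apply, sum_Ico_eq_sum_range, add_comm 1]

lemma tendsto_sum_Ico_one_prod_range {R : Type*} [CommSemiring R] [TopologicalSpace R]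
    [IsTopologicalSemiring R] {a : ℕ → R} (h : Summable fun j => ∏ i ∈ range j, a (i + 1)) :
    Tendsto (fun τ => ∑ j ∈ Ico 1 τ, ∏ i ∈ range j, a i) atTop
      (𝓝 (∑' j, ∏ i ∈ range (j + 1), a i)) :=
  tendsto_sum_Ico_one_of_hasSum h.prod_range_succ.hasSum

lemma summable_prod_one_sub_div_add_rpow {α a B : ℝ} (hα0 : 0 ≤ α) (hα1 : α < 1) (ha : 0 < a)
    (hB : 0 < B) (haB : a ≤ B + 1) :
    Summable fun j : ℕ => ∏ i ∈ range j, (1 - a / (B + ((i + 1 : ℕ) : ℝ) ^ α)) := by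
  have hle_one : ∀ i : ℕ, a / (B + ((i + 1 : ℕ) : ℝ) ^ α) ≤ 1 := fun i =>
    div_le_one_of_le₀ (haB.trans (by gcongr; exact one_le_rpow (by simp) hα0)) (by positivity)
  refine (summable_exp_neg_mul_rpow_s10 (by positivity : 0 < a / (B + 1)) (sub_pos.mpr hα1)
    ).of_nonneg_of_le (fun j => prod_nonneg fun i _ => sub_nonneg.mpr (hle_one i)) fun j => ?_
  refine (prod_one_sub_le_exp_neg_sum fun i _ => hle_one i).trans ?_
  rw [exp_le_exp, neg_mul, neg_le_neg_iff]
  rcases j.eq_zero_or_pos with rfl | hj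
  · simp [zero_rpow (sub_pos.mpr hα1).ne']
  have hj1 : (1 : ℝ) ≤ (j : ℝ) ^ α := one_le_rpow (by exact_mod_cast hj) hα0
  calc a / (B + 1) * (j : ℝ) ^ (1 - α) = ∑ i ∈ range j, a / ((B + 1) * (j : ℝ) ^ α) := by
        rw [sum_const, card_range, nsmul_eq_mul, rpow_one_sub' (Nat.cast_nonneg j)
          (sub_pos.mpr hα1).ne']
        field_simp
    _ ≤ ∑ i ∈ range j, a / (B + ((i + 1 : ℕ) : ℝ) ^ α) := by
        refine sum_le_sum fun i hi => div_le_div_of_nonneg_left ha.le (by positivity) ?_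
        have hij : ((i + 1 : ℕ) : ℝ) ^ α ≤ (j : ℝ) ^ α :=
          rpow_le_rpow (Nat.cast_nonneg _) (by exact_mod_cast mem_range.mp hi) hα0
        nlinarith

section IndependentProducts

variable {Ω : Type*} [MeasurableSpace Ω] {μ : Measure Ω} [IsProbabilityMeasure μ]
  {X : ℕ → Ω → ℝ}

lemma integrable_finset_prod_of_memLp_top (hX : ∀ i, MemLp (X i) ⊤ μ) (s : Finset ℕ) :
    Integrable (fun ω => ∏ i ∈ s, X i ω) μ := by
  have := MemLp.prod' (s := s) (p := fun _ => ⊤) fun i _ => hX i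
  simp only [ENNReal.inv_top, sum_const_zero, ENNReal.inv_zero] at this
  exact this.integrable le_top

lemma bddAbove_integral_sum_Ico_one_prod_range (hX : iIndepFun X μ)
    (hbdd : ∀ i, MemLp (X i) ⊤ μ)
    (hs : Summable fun j => ∏ i ∈ range j, ∫ ω, X (i + 1) ω ∂μ) :
    BddAbove (Set.range fun τ : ℕ => ∫ ω, ∑ j ∈ Ico 1 τ, ∏ i ∈ range j, X i ω ∂μ) := by
  have hE : ∀ τ, ∫ ω, ∑ j ∈ Ico 1 τ, ∏ i ∈ range j, X i ω ∂μ
      = ∑ j ∈ Ico 1 τ, ∏ i ∈ range j, ∫ ω, X i ω ∂μ := fun τ => by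
    rw [integral_finsetSum _ fun j _ => integrable_finset_prod_of_memLp_top hbdd _]
    exact sum_congr rfl fun j _ =>
      hX.integral_finset_prod_eq_prod_integral (fun i => (hbdd i).1) _
  rw [funext hE]
  exact (tendsto_sum_Ico_one_prod_range (a := fun i => ∫ ω, X i ω ∂μ) hs).bddAbove_range

lemma ae_summable_prod_range_add_one (hX : iIndepFun X μ) (hbdd : ∀ i, MemLp (X i) ⊤ μ)
    (hnonneg : ∀ i ω, 0 ≤ X (i + 1) ω)
    (hs : Summable fun j => ∏ i ∈ range j, ∫ ω, X (i + 1) ω ∂μ) :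
    ∀ᵐ ω ∂μ, Summable fun j => ∏ i ∈ range j, X (i + 1) ω := by
  refine ae_summable_of_summable_integral_norm
    (fun j => integrable_finset_prod_of_memLp_top (fun i => hbdd (i + 1)) _)
    (hs.congr fun j => ?_)
  simp_rw [norm_of_nonneg (prod_nonneg fun i _ => hnonneg i _)]
  exact ((hX.precomp (add_left_injective 1)).integral_finset_prod_eq_prod_integral
    (fun i => (hbdd (i + 1)).1) _).symm

end IndependentProducts

lemma abs_one_sub_div_le {h A B M t z : ℝ} (hh : 0 < h) (hA : 0 < A) (hB : 0 < B)
    (ht : 0 ≤ t) (hz : z ∈ Set.Icc 0 M) :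
    |1 - h * z * A / (B + t)| ≤ 1 + h * M * A / B := by
  have hM : 0 ≤ M := hz.1.trans hz.2
  have hlow : 0 ≤ h * z * A / (B + t) := by have := hz.1; positivity
  have hup : h * z * A / (B + t) ≤ h * M * A / B :=
    div_le_div₀ (by positivity) (by gcongr; exact hz.2) hB (by linarith)
  rw [abs_le]
  constructor <;> linarith [show 0 ≤ h * M * A / B by positivity]

lemma one_sub_div_nonneg {h A B M t z : ℝ} (hh : 0 < h) (hA : 0 < A) (hB : 0 < B)
    (ht : 1 ≤ t) (hz : z ∈ Set.Icc 0 M) (hMA : h * M * A / (B + 1) ≤ 1) :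
    0 ≤ 1 - h * z * A / (B + t) := by
  have hM : 0 ≤ M := hz.1.trans hz.2
  have : h * z * A / (B + t) ≤ h * M * A / (B + 1) :=
    div_le_div₀ (by positivity) (by gcongr; exact hz.2) (by positivity) (by linarith)
  linarith

/-- Sub-linear case: for independent random variables `ζ_i ∈ [0, M]` with common
mean `m > 0`, the random series `S[τ] = Σ_{j=1}^{τ−1} Π_{i=0}^{j−1} (1 − hζ_i A/(B+i^α))`
has uniformly bounded expectations and converges almost surely to a finite limit. -/
theorem stmt10 (α : ℝ) (hα0 : 0 ≤ α) (hα1 : α < 1)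
    (h A B M m : ℝ) (hh : 0 < h) (hA : 0 < A) (hB : 0 < B) (hm : 0 < m)
    (hMA : h * M * A / (B + 1) ≤ 1)
    (Ω : Type*) [MeasurableSpace Ω] (P : Measure Ω) [IsProbabilityMeasure P]
    (ζ : ℕ → Ω → ℝ) (hmeas : ∀ i, Measurable (ζ i))
    (hrange : ∀ i ω, ζ i ω ∈ Set.Icc (0 : ℝ) M)
    (hmean : ∀ i, ∫ ω, ζ i ω ∂P = m)
    (hindep : iIndepFun ζ P) :
    BddAbove (Set.range fun τ : ℕ =>
      ∫ ω, (∑ j ∈ Finset.Ico 1 τ,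
        ∏ i ∈ Finset.range j, (1 - h * ζ i ω * A / (B + (i : ℝ) ^ α))) ∂P) ∧
    ∀ᵐ ω ∂P,
      (Summable fun j : ℕ =>
        ∏ i ∈ Finset.range (j + 1), (1 - h * ζ i ω * A / (B + (i : ℝ) ^ α))) ∧
      Tendsto (fun τ : ℕ => ∑ j ∈ Finset.Ico 1 τ,
          ∏ i ∈ Finset.range j, (1 - h * ζ i ω * A / (B + (i : ℝ) ^ α)))
        atTop
        (nhds (∑' j : ℕ,
          ∏ i ∈ Finset.range (j + 1), (1 - h * ζ i ω * A / (B + (i : ℝ) ^ α)))) := by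
  set F : ℕ → Ω → ℝ := fun i ω => 1 - h * ζ i ω * A / (B + (i : ℝ) ^ α)
  have hF_meas : ∀ i, Measurable (F i) := fun i => by fun_prop
  have hF_indep : iIndepFun F P :=
    hindep.comp (fun i x => 1 - h * x * A / (B + (i : ℝ) ^ α)) fun i => by fun_prop
  have hF_bdd : ∀ i, MemLp (F i) ⊤ P := fun i =>
    memLp_top_of_bound (hF_meas i).aestronglyMeasurable _ <| ae_of_all _ fun ω =>
      abs_one_sub_div_le hh hA hB (rpow_nonneg (Nat.cast_nonneg i) α) (hrange i ω)
  have hF_nonneg : ∀ i ω, 0 ≤ F (i + 1) ω := fun i ω =>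
    one_sub_div_nonneg hh hA hB (one_le_rpow (by simp) hα0) (hrange (i + 1) ω) hMA
  have hζ_int : ∀ i, Integrable (ζ i) P := fun i =>
    Integrable.of_integral_ne_zero (by rw [hmean]; exact hm.ne')
  have hF_mean : ∀ i, ∫ ω, F i ω ∂P = 1 - h * m * A / (B + (i : ℝ) ^ α) := fun i => by
    rw [integral_sub (integrable_const 1)
      ((((hζ_int i).const_mul h).mul_const A).div_const (B + (i : ℝ) ^ α)),
      integral_const, integral_div, integral_mul_const, integral_const_mul, hmean]
    simp
  have hmM : m ≤ M := by
    simpa [hmean] using integral_mono (hζ_int 0) (integrable_const M) fun ω => (hrange 0 ω).2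
  have hs : Summable fun j => ∏ i ∈ range j, ∫ ω, F (i + 1) ω ∂P := by
    simp_rw [hF_mean]
    refine summable_prod_one_sub_div_add_rpow hα0 hα1 (by positivity) hB ?_
    calc h * m * A ≤ h * M * A := by gcongr
      _ ≤ B + 1 := (div_le_one (by positivity)).mp hMA
  refine ⟨bddAbove_integral_sum_Ico_one_prod_range hF_indep hF_bdd hs, ?_⟩
  filter_upwards [ae_summable_prod_range_add_one hF_indep hF_bdd hF_nonneg hs] with ω hω
  exact ⟨Summable.prod_range_succ (a := (F · ω)) hω,
    tendsto_sum_Ico_one_prod_range (a := (F · ω)) hω⟩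
end
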